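/- arXiv:2203.13065 — 2 statements merged into one kernel-verified Lean document; each statement's English description precedes it below -/
import Mathlib

section
/- Let A be a 2×2 real matrix of the form [[a, b],[c, λ₁+λ₂−a]] with distinct positive eigenvalues λ₁ > λ₂ > 0 and λ₁ > λ₂ > a, bc = (λ₁−a)(a−λ₂). Then x' = Ax is Hyers-Ulam stable on ℝ with constant K = max{ (λ₁+λ₂+|b|−a)/(λ₁λ₂), (a+|c|+2(λ₂−a)((λ₁−a)/(λ₂−a))^{−λ₂/(λ₁−λ₂)})/(λ₁λ₂) }. -/
/-!
Both eigenvalues `λ₁ > λ₂` of `A` are positive, so `e^{-uA}` decays as `u → ∞`. Given `φ` with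
defect `g = φ' - Aφ`, `‖g‖ ≤ ε`, take `x₀ = φ 0 + ∫₀^∞ e^{-sA} g(s) ds`; variation of constants
gives `φ t - e^{tA} x₀ = -∫₀^∞ e^{-uA} g(t + u) du`, so the `i`-th coordinate of the error is at
most `ε ∑ⱼ ∫₀^∞ |(e^{-uA})ᵢⱼ| du`. Since `(A - λ₁)(A - λ₂) = 0`, every entry of `e^{-uA}` is a
combination of `e^{-λ₁u}` and `e^{-λ₂u}`. All entries but the lower-right one keep a constant
sign; that one changes sign once, at `u₀ = log ((λ₁ - a) / (λ₂ - a)) / (λ₁ - λ₂)`, which is where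
the power `((λ₁ - a) / (λ₂ - a)) ^ (-λ₂ / (λ₁ - λ₂))` in the constant comes from.
-/

open Matrix MeasureTheory Set Real
open scoped Matrix.Norms.Operator

section ExpIntegrals

theorem integral_Ioi_comp_const_add {E : Type*} [NormedAddCommGroup E] [NormedSpace ℝ E]
    (f : ℝ → E) (t : ℝ) : ∫ u in Ioi 0, f (t + u) = ∫ s in Ioi t, f s := by
  simpa using (measurePreserving_add_left volume t).setIntegral_preimage_emb
    (measurableEmbedding_addLeft t) f (Ioi t)

variable {p q : ℝ}

theorem integrableOn_exp_sub_exp (hp : 0 < p) (hq : 0 < q) (α β c : ℝ) :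
    IntegrableOn (fun u => α * exp (-p * u) - β * exp (-q * u)) (Ioi c) :=
  ((integrableOn_exp_mul_Ioi (neg_neg_of_pos hp) c).const_mul α).sub
    ((integrableOn_exp_mul_Ioi (neg_neg_of_pos hq) c).const_mul β)

theorem integral_exp_sub_exp (hp : 0 < p) (hq : 0 < q) (α β c : ℝ) :
    ∫ u in Ioi c, (α * exp (-p * u) - β * exp (-q * u)) =
      α * exp (-p * c) / p - β * exp (-q * c) / q := by
  rw [integral_sub ((integrableOn_exp_mul_Ioi (neg_neg_of_pos hp) c).const_mul α)
      ((integrableOn_exp_mul_Ioi (neg_neg_of_pos hq) c).const_mul β),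
    integral_const_mul, integral_const_mul, integral_exp_mul_Ioi (neg_neg_of_pos hp),
    integral_exp_mul_Ioi (neg_neg_of_pos hq)]
  field_simp

theorem integral_abs_Ioi_eq_of_sign_change {f : ℝ → ℝ} {a c : ℝ} (hac : a ≤ c)
    (hf : IntegrableOn f (Ioi a)) (hpos : ∀ u ∈ Ioc a c, 0 ≤ f u) (hneg : ∀ u ∈ Ioi c, f u ≤ 0) :
    ∫ u in Ioi a, |f u| = (∫ u in Ioi a, f u) - 2 * ∫ u in Ioi c, f u := by
  have hfc : IntegrableOn f (Ioi c) := hf.mono_set (Ioi_subset_Ioi hac)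
  have hsplit := intervalIntegral.integral_interval_add_Ioi hf hfc
  have hsplit_abs := intervalIntegral.integral_interval_add_Ioi hf.abs hfc.abs
  have hleft : ∫ u in a..c, |f u| = ∫ u in a..c, f u := by
    rw [intervalIntegral.integral_of_le hac, intervalIntegral.integral_of_le hac]
    exact setIntegral_congr_fun measurableSet_Ioc fun u hu => abs_of_nonneg (hpos u hu)
  have hright : ∫ u in Ioi c, |f u| = -∫ u in Ioi c, f u := by
    rw [← integral_neg]
    exact setIntegral_congr_fun measurableSet_Ioi fun u hu => abs_of_nonpos (hneg u hu)
  rw [← hsplit, ← hsplit_abs, hleft, hright]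
  ring

theorem integral_abs_exp_sub_exp_of_le (hp : 0 < p) (hpq : p ≤ q) {α β : ℝ} (hβ : 0 ≤ β)
    (hβα : β ≤ α) :
    ∫ u in Ioi 0, |α * exp (-p * u) - β * exp (-q * u)| = α / p - β / q := by
  have hq : 0 < q := hp.trans_le hpq
  rw [setIntegral_congr_fun measurableSet_Ioi fun u (hu : 0 < u) => abs_of_nonneg ?_,
    integral_exp_sub_exp hp hq]
  · simp
  have hexp : exp (-q * u) ≤ exp (-p * u) :=
    exp_le_exp.2 (mul_le_mul_of_nonneg_right (neg_le_neg hpq) hu.le)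
  exact sub_nonneg.2 ((mul_le_mul_of_nonneg_left hexp hβ).trans
    (mul_le_mul_of_nonneg_right hβα (exp_pos _).le))

theorem integral_abs_exp_sub_exp_of_lt (hq : 0 < q) (hqp : q < p) {α β : ℝ} (hβ : 0 < β)
    (hβα : β ≤ α) :
    ∫ u in Ioi 0, |α * exp (-p * u) - β * exp (-q * u)| =
      α / p - β / q + 2 * β * (p - q) / (p * q) * (α / β) ^ (-q / (p - q)) := by
  have hp : 0 < p := hq.trans hqp
  have hpq : 0 < p - q := sub_pos.2 hqp
  have hαβ : 0 < α / β := div_pos (hβ.trans_le hβα) hβ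
  set u₀ := log (α / β) / (p - q) with hu₀
  have hu₀_nonneg : 0 ≤ u₀ := div_nonneg (log_nonneg ((one_le_div hβ).2 hβα)) hpq.le
  -- the sign change happens at `u₀`, where `α e^{-p u₀} = β e^{-q u₀}`
  have hfactor : ∀ u, α * exp (-p * u) - β * exp (-q * u) =
      β * exp (-q * u) * (exp ((p - q) * (u₀ - u)) - 1) := by
    intro u
    have h₁ : exp ((p - q) * (u₀ - u)) = α / β * exp (-(p - q) * u) := by
      rw [show (p - q) * (u₀ - u) = log (α / β) + -(p - q) * u by rw [hu₀]; field_simp; ring,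
        exp_add, exp_log hαβ]
    have h₂ : exp (-p * u) = exp (-q * u) * exp (-(p - q) * u) := by
      rw [← exp_add]
      ring_nf
    rw [h₁, h₂]
    field_simp
  have hcross : α * exp (-p * u₀) = β * exp (-q * u₀) := by
    simpa [sub_eq_zero] using hfactor u₀
  have hX : exp (-q * u₀) = (α / β) ^ (-q / (p - q)) := by
    rw [rpow_def_of_pos hαβ, hu₀]
    congr 1
    field_simp
  rw [integral_abs_Ioi_eq_of_sign_change hu₀_nonneg (integrableOn_exp_sub_exp hp hq α β 0),
    integral_exp_sub_exp hp hq α β 0, integral_exp_sub_exp hp hq α β u₀, hcross, hX]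
  · simp only [mul_zero, exp_zero, mul_one]
    field_simp
    ring
  · intro u hu
    rw [hfactor]
    have : 1 ≤ exp ((p - q) * (u₀ - u)) := one_le_exp (mul_nonneg hpq.le (by linarith [hu.2]))
    exact mul_nonneg (mul_nonneg hβ.le (exp_pos _).le) (sub_nonneg.2 this)
  · intro u hu
    rw [hfactor]
    have : exp ((p - q) * (u₀ - u)) ≤ 1 :=
      exp_le_one_iff.2 (mul_nonpos_of_nonneg_of_nonpos hpq.le (by linarith [mem_Ioi.1 hu]))
    exact mul_nonpos_of_nonneg_of_nonpos (mul_nonneg hβ.le (exp_pos _).le) (sub_nonpos.2 this)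

end ExpIntegrals

section NormedAlgebra

variable {𝔸 : Type*} [NormedRing 𝔸] [NormedAlgebra ℝ 𝔸] [CompleteSpace 𝔸]

theorem NormedSpace.exp_smul_mul_exp_smul [NormedAlgebra ℚ 𝔸] (A : 𝔸) (s t : ℝ) :
    NormedSpace.exp (s • A) * NormedSpace.exp (t • A) = NormedSpace.exp ((s + t) • A) := by
  rw [← NormedSpace.exp_add_of_commute (((Commute.refl A).smul_left s).smul_right t), add_smul]

theorem hasDerivAt_exp_neg_smul_mul {A B : 𝔸} {E : ℝ → 𝔸} {t : ℝ} (hE : HasDerivAt E B t) :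
    HasDerivAt (fun s => NormedSpace.exp ((-s) • A) * E s)
      (NormedSpace.exp ((-t) • A) * (B - A * E t)) t := by
  have hexp : HasDerivAt (fun s : ℝ => NormedSpace.exp ((-s) • A))
      (NormedSpace.exp ((-t) • A) * -A) t := by
    simpa [smul_neg, neg_smul] using hasDerivAt_exp_smul_const (-A) t
  refine (hexp.mul hE).congr_deriv ?_
  rw [mul_neg, neg_mul, mul_sub, mul_assoc]
  abel

theorem eq_exp_smul_mul_of_hasDerivAt [NormedAlgebra ℚ 𝔸] {A : 𝔸} {E : ℝ → 𝔸}
    (hE : ∀ t, HasDerivAt E (A * E t) t) (t : ℝ) : E t = NormedSpace.exp (t • A) * E 0 := by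
  have hderiv : ∀ s, HasDerivAt (fun s => NormedSpace.exp ((-s) • A) * E s) 0 s := fun s => by
    simpa using hasDerivAt_exp_neg_smul_mul (A := A) (hE s)
  have hconst := is_const_of_deriv_eq_zero (fun s => (hderiv s).differentiableAt)
    (fun s => (hderiv s).deriv) t 0
  simp only [neg_zero, zero_smul, NormedSpace.exp_zero, one_mul] at hconst
  rw [← hconst, ← mul_assoc, NormedSpace.exp_smul_mul_exp_smul, add_neg_cancel, zero_smul,
    NormedSpace.exp_zero, one_mul]

theorem exp_smul_eq_of_mul_eq_zero [NormedAlgebra ℚ 𝔸] {A : 𝔸} {l₁ l₂ : ℝ} (hl : l₁ ≠ l₂)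
    (hA : (A - l₁ • 1) * (A - l₂ • 1) = 0) (t : ℝ) :
    NormedSpace.exp (t • A) =
      (l₁ - l₂)⁻¹ • (exp (l₁ * t) • (A - l₂ • 1) - exp (l₂ * t) • (A - l₁ • 1)) := by
  set E : ℝ → 𝔸 := fun t =>
    (l₁ - l₂)⁻¹ • (exp (l₁ * t) • (A - l₂ • 1) - exp (l₂ * t) • (A - l₁ • 1)) with hE
  have hA₁ : A * (A - l₂ • 1) = l₁ • (A - l₂ • 1) := by
    rwa [sub_mul, smul_mul_assoc, one_mul, sub_eq_zero] at hA
  have hA₂ : A * (A - l₁ • 1) = l₂ • (A - l₁ • 1) := by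
    have hcomm : Commute (A - l₂ • 1) (A - l₁ • 1) :=
      ((Commute.refl A).sub_right ((Commute.one_right A).smul_right l₁)).sub_left
        ((Commute.one_left _).smul_left l₂)
    rwa [← hcomm.eq, sub_mul, smul_mul_assoc, one_mul, sub_eq_zero] at hA
  have hderiv : ∀ t, HasDerivAt E (A * E t) t := by
    intro t
    have hexp (l : ℝ) : HasDerivAt (fun t => exp (l * t)) (exp (l * t) * (l * 1)) t :=
      ((hasDerivAt_id t).const_mul l).exp
    refine (((hexp l₁).smul_const (A - l₂ • 1)).sub
      ((hexp l₂).smul_const (A - l₁ • 1))).const_smul (l₁ - l₂)⁻¹ |>.congr_deriv ?_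
    rw [hE, mul_smul_comm, mul_sub, mul_smul_comm, mul_smul_comm, hA₁, hA₂]
    module
  have hE0 : E 0 = 1 := by
    simp only [hE, mul_zero, exp_zero, one_smul]
    rw [sub_sub_sub_cancel_left, ← sub_smul, smul_smul, inv_mul_cancel₀ (sub_ne_zero.2 hl),
      one_smul]
  simpa [hE0] using (eq_exp_smul_mul_of_hasDerivAt hderiv t).symm

end NormedAlgebra

section Matrix

variable {m n : Type*}

theorem abs_mulVec_apply_le [Fintype n] (M : Matrix m n ℝ) (v : n → ℝ) (i : m) :
    |(M *ᵥ v) i| ≤ (∑ j, |M i j|) * ‖v‖ := by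
  rw [Finset.sum_mul]
  refine (Finset.abs_sum_le_sum_abs _ _).trans (Finset.sum_le_sum fun j _ => ?_)
  rw [abs_mul]
  exact mul_le_mul_of_nonneg_left (norm_le_pi_norm v j) (abs_nonneg _)

variable [Fintype m] [Fintype n]

theorem HasDerivAt.matrix_mulVec {M : ℝ → Matrix m n ℝ} {M' : Matrix m n ℝ} {v : ℝ → n → ℝ}
    {v' : n → ℝ} {t : ℝ} (hM : HasDerivAt M M' t) (hv : HasDerivAt v v' t) :
    HasDerivAt (fun s => M s *ᵥ v s) (M t *ᵥ v' + M' *ᵥ v t) t :=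
  (LinearMap.toContinuousBilinearMap (mulVecBilin ℝ ℝ : Matrix m n ℝ →ₗ[ℝ] _ →ₗ[ℝ] m → ℝ)
    ).hasDerivAt_of_bilinear (fun _ => hM) (fun _ => hv)

theorem MeasureTheory.Integrable.matrix_mulVec {α : Type*} [MeasurableSpace α] {μ : Measure α}
    {M : α → Matrix m n ℝ} {v : α → n → ℝ} {C : ℝ} (hM : ∀ i j, Integrable (fun x => M x i j) μ)
    (hv : AEStronglyMeasurable v μ) (hC : ∀ x, ‖v x‖ ≤ C) :
    Integrable (fun x => M x *ᵥ v x) μ :=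
  Integrable.of_eval fun i => integrable_finsetSum _ fun j _ =>
    (hM i j).mul_bdd ((continuous_apply j).comp_aestronglyMeasurable hv)
      (ae_of_all _ fun x => (norm_le_pi_norm (v x) j).trans (hC x))

variable [DecidableEq n]

-- Restated with the multiplication of `Matrix`, which `rw` does not identify with the one of the
-- operator-norm ring structure used by `NormedSpace.exp_smul_mul_exp_smul`.
theorem Matrix.exp_smul_mul_exp_smul (A : Matrix n n ℝ) (s t : ℝ) :
    NormedSpace.exp (s • A) * NormedSpace.exp (t • A) = NormedSpace.exp ((s + t) • A) :=
  NormedSpace.exp_smul_mul_exp_smul A s t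

theorem continuous_exp_neg_smul (A : Matrix n n ℝ) :
    Continuous fun s : ℝ => NormedSpace.exp ((-s) • A) :=
  NormedSpace.exp_continuous.comp (continuous_neg.smul continuous_const)

theorem hasDerivAt_exp_neg_smul_mulVec (A : Matrix n n ℝ) {φ : ℝ → n → ℝ} {φ' : n → ℝ} {t : ℝ}
    (hφ : HasDerivAt φ φ' t) :
    HasDerivAt (fun s => NormedSpace.exp ((-s) • A) *ᵥ φ s)
      (NormedSpace.exp ((-t) • A) *ᵥ (φ' - A *ᵥ φ t)) t := by
  have hexp := hasDerivAt_exp_smul_const (-A) t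
  simp only [smul_neg, ← neg_smul] at hexp
  refine (hexp.matrix_mulVec hφ).congr_deriv ?_
  rw [mulVec_sub, ← mulVec_mulVec, neg_mulVec, mulVec_neg, sub_eq_add_neg]
  -- `hexp` multiplies through the operator-norm ring structure, which agrees definitionally
  rfl

end Matrix

section HyersUlam

variable {n : Type*} [Fintype n] [DecidableEq n]

def IsHyersUlamStable (A : Matrix n n ℝ) (K : ℝ) : Prop :=
  ∀ ε > (0:ℝ), ∀ φ : ℝ → (n → ℝ), Differentiable ℝ φ →
    (∀ t : ℝ, ‖deriv φ t - A.mulVec (φ t)‖ ≤ ε) →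
    ∃ x₀ : n → ℝ, ∀ t : ℝ, ‖φ t - (NormedSpace.exp (t • A)).mulVec x₀‖ ≤ K * ε

/-- Variation of constants, with the free constant fixed at `+∞` so that only the future of the
defect enters. -/
theorem sub_exp_smul_mulVec_eq_neg_integral (A : Matrix n n ℝ) {φ : ℝ → n → ℝ}
    (hφ : Differentiable ℝ φ)
    (hint : ∀ c, IntegrableOn
      (fun s => NormedSpace.exp ((-s) • A) *ᵥ (deriv φ s - A *ᵥ φ s)) (Ioi c))
    (t : ℝ) :
    φ t - NormedSpace.exp (t • A) *ᵥ
        (φ 0 + ∫ s in Ioi 0, NormedSpace.exp ((-s) • A) *ᵥ (deriv φ s - A *ᵥ φ s)) =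
      -∫ u in Ioi 0, NormedSpace.exp ((-u) • A) *ᵥ (deriv φ (t + u) - A *ᵥ φ (t + u)) := by
  have hftc : ∫ s in 0..t, NormedSpace.exp ((-s) • A) *ᵥ (deriv φ s - A *ᵥ φ s) =
      NormedSpace.exp ((-t) • A) *ᵥ φ t - φ 0 := by
    have := intervalIntegral.integral_eq_sub_of_hasDerivAt
      (fun s _ => hasDerivAt_exp_neg_smul_mulVec A (hφ s).hasDerivAt)
      (intervalIntegrable_iff.2 ((hint (min 0 t)).mono_set Ioc_subset_Ioi_self))
    rwa [neg_zero, zero_smul, NormedSpace.exp_zero, one_mulVec] at this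
  have hsplit := intervalIntegral.integral_interval_add_Ioi (hint 0) (hint t)
  have hcomm := (mulVecLin (NormedSpace.exp (t • A))).toContinuousLinearMap.integral_comp_comm
    (hint t)
  simp only [LinearMap.coe_toContinuousLinearMap', mulVecLin_apply, mulVec_mulVec,
    exp_smul_mul_exp_smul] at hcomm
  rw [← integral_Ioi_comp_const_add] at hcomm
  simp only [show ∀ u, t + -(t + u) = -u by intro u; ring] at hcomm
  rw [← hsplit, hftc, mulVec_add, mulVec_add, ← hcomm, mulVec_sub, mulVec_mulVec,
    exp_smul_mul_exp_smul, add_neg_cancel, zero_smul, NormedSpace.exp_zero, one_mulVec]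
  abel

theorem IsHyersUlamStable.of_integrable [Nonempty n] {A : Matrix n n ℝ} {K : ℝ}
    (hint : ∀ i j, IntegrableOn (fun u : ℝ => NormedSpace.exp ((-u) • A) i j) (Ioi 0))
    (hK : ∀ i, ∑ j, ∫ u in Ioi (0 : ℝ), |NormedSpace.exp ((-u) • A) i j| ≤ K) :
    IsHyersUlamStable A K := by
  intro ε hε φ hφ hφA
  have hdefect : Measurable fun s => deriv φ s - A *ᵥ φ s :=
    (measurable_deriv φ).sub (continuous_const.matrix_mulVec hφ.continuous).measurable
  have hint_Ioi (c : ℝ) (i j : n) :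
      IntegrableOn (fun s => NormedSpace.exp ((-s) • A) i j) (Ioi c) := by
    refine (((continuous_exp_neg_smul A).matrix_elem i j).integrableOn_Icc (a := c) (b := 0)
      |>.union (hint i j)).mono_set fun s (hs : c < s) => ?_
    rcases le_or_gt s 0 with h | h
    exacts [Or.inl ⟨hs.le, h⟩, Or.inr h]
  refine ⟨φ 0 + ∫ s in Ioi 0, NormedSpace.exp ((-s) • A) *ᵥ (deriv φ s - A *ᵥ φ s), fun t => ?_⟩
  have hfuture : Integrable (fun u => NormedSpace.exp ((-u) • A) *ᵥ
      (deriv φ (t + u) - A *ᵥ φ (t + u))) (volume.restrict (Ioi 0)) :=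
    .matrix_mulVec hint (hdefect.comp (measurable_const_add t)).aestronglyMeasurable
      fun u => hφA (t + u)
  rw [sub_exp_smul_mulVec_eq_neg_integral A hφ (fun c => .matrix_mulVec (hint_Ioi c)
    hdefect.aestronglyMeasurable hφA) t, norm_neg, pi_norm_le_iff_of_nonempty]
  intro i
  rw [eval_integral hfuture.eval i]
  calc ‖∫ u in Ioi 0, (NormedSpace.exp ((-u) • A) *ᵥ (deriv φ (t + u) - A *ᵥ φ (t + u))) i‖
      ≤ ∫ u in Ioi 0, (∑ j, |NormedSpace.exp ((-u) • A) i j|) * ε :=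
        norm_integral_le_of_norm_le
          ((integrable_finsetSum _ fun j _ => (hint i j).abs).mul_const ε)
          (ae_of_all _ fun u => (abs_mulVec_apply_le _ _ i).trans
            (mul_le_mul_of_nonneg_left (hφA (t + u)) (Finset.sum_nonneg fun j _ => abs_nonneg _)))
    _ = (∑ j, ∫ u in Ioi (0 : ℝ), |NormedSpace.exp ((-u) • A) i j|) * ε := by
        rw [integral_mul_const, integral_finsetSum _ fun j _ => (hint i j).abs]
    _ ≤ K * ε := mul_le_mul_of_nonneg_right (hK i) hε.le

end HyersUlam

section QuadraticMatrix

variable {n : Type*} [Fintype n] [DecidableEq n] {A : Matrix n n ℝ} {l₁ l₂ : ℝ}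

theorem Matrix.exp_neg_smul_apply_of_mul_eq_zero (hl : l₁ ≠ l₂)
    (hA : (A - l₁ • 1) * (A - l₂ • 1) = 0) (u : ℝ) (i j : n) :
    NormedSpace.exp ((-u) • A) i j =
      ((A - l₂ • 1) i j * exp (-l₁ * u) - (A - l₁ • 1) i j * exp (-l₂ * u)) / (l₁ - l₂) := by
  refine (congrFun (congrFun (exp_smul_eq_of_mul_eq_zero hl hA (-u)) i) j).trans ?_
  simp only [smul_apply, sub_apply, smul_eq_mul, mul_neg, neg_mul]
  field_simp

theorem integrableOn_exp_neg_smul_apply (h₁ : 0 < l₁) (h₂ : 0 < l₂) (hl : l₁ ≠ l₂)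
    (hA : (A - l₁ • 1) * (A - l₂ • 1) = 0) (i j : n) :
    IntegrableOn (fun u : ℝ => NormedSpace.exp ((-u) • A) i j) (Ioi 0) := by
  simp_rw [exp_neg_smul_apply_of_mul_eq_zero hl hA]
  exact (integrableOn_exp_sub_exp h₁ h₂ _ _ 0).div_const _

theorem integral_abs_exp_neg_smul_apply (h : l₂ < l₁) (hA : (A - l₁ • 1) * (A - l₂ • 1) = 0)
    (i j : n) :
    ∫ u in Ioi (0 : ℝ), |NormedSpace.exp ((-u) • A) i j| =
      (∫ u in Ioi (0 : ℝ),
        |(A - l₂ • 1) i j * exp (-l₁ * u) - (A - l₁ • 1) i j * exp (-l₂ * u)|) / (l₁ - l₂) := by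
  simp_rw [exp_neg_smul_apply_of_mul_eq_zero h.ne' hA, abs_div, abs_of_pos (sub_pos.2 h)]
  exact integral_div _ _

end QuadraticMatrix

section TwoByTwo

variable {a b c l₁ l₂ : ℝ}

theorem sub_smul_one_mul_sub_smul_one_eq_zero (hbc : b * c = (l₁ - a) * (a - l₂)) :
    (!![a, b; c, l₁ + l₂ - a] - l₁ • 1) * (!![a, b; c, l₁ + l₂ - a] - l₂ • 1) = 0 := by
  ext i j
  fin_cases i <;> fin_cases j <;> simp [Matrix.mul_apply, Fin.sum_univ_two]
  · linear_combination hbc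
  · ring
  · ring
  · linear_combination hbc

theorem sum_integral_abs_exp_neg_smul_apply_zero (h12 : l₂ < l₁) (h2 : 0 < l₂) (h2a : a < l₂)
    (hbc : b * c = (l₁ - a) * (a - l₂)) :
    ∑ j, ∫ u in Ioi (0 : ℝ), |NormedSpace.exp ((-u) • !![a, b; c, l₁ + l₂ - a]) 0 j| =
      (l₁ + l₂ + |b| - a) / (l₁ * l₂) := by
  have hA := sub_smul_one_mul_sub_smul_one_eq_zero hbc
  have h₁ : 0 < l₁ := h2.trans h12
  have hdiag : ∫ u in Ioi (0 : ℝ), |NormedSpace.exp ((-u) • !![a, b; c, l₁ + l₂ - a]) 0 0| =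
      ((l₁ - a) / l₂ - (l₂ - a) / l₁) / (l₁ - l₂) := by
    rw [integral_abs_exp_neg_smul_apply h12 hA, ← integral_abs_exp_sub_exp_of_le h2 h12.le
      (sub_pos.2 h2a).le (by linarith)]
    congr 1
    refine setIntegral_congr_fun measurableSet_Ioi fun u _ => ?_
    congr 1
    simp
    ring
  have hoff : ∫ u in Ioi (0 : ℝ), |NormedSpace.exp ((-u) • !![a, b; c, l₁ + l₂ - a]) 0 1| =
      |b| * (1 / l₂ - 1 / l₁) / (l₁ - l₂) := by
    rw [integral_abs_exp_neg_smul_apply h12 hA, ← integral_abs_exp_sub_exp_of_le h2 h12.le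
      zero_le_one le_rfl, ← integral_const_mul]
    congr 1
    refine setIntegral_congr_fun measurableSet_Ioi fun u _ => ?_
    rw [← abs_mul, ← abs_neg]
    congr 1
    simp
    ring
  have hd : l₁ - l₂ ≠ 0 := (sub_pos.2 h12).ne'
  rw [Fin.sum_univ_two, hdiag, hoff]
  field_simp
  ring

theorem sum_integral_abs_exp_neg_smul_apply_one (h12 : l₂ < l₁) (h2 : 0 < l₂) (h2a : a < l₂)
    (hbc : b * c = (l₁ - a) * (a - l₂)) :
    ∑ j, ∫ u in Ioi (0 : ℝ), |NormedSpace.exp ((-u) • !![a, b; c, l₁ + l₂ - a]) 1 j| =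
      (a + |c| + 2 * (l₂ - a) * ((l₁ - a) / (l₂ - a)) ^ (-l₂ / (l₁ - l₂))) / (l₁ * l₂) := by
  have hA := sub_smul_one_mul_sub_smul_one_eq_zero hbc
  have h₁ : 0 < l₁ := h2.trans h12
  have hoff : ∫ u in Ioi (0 : ℝ), |NormedSpace.exp ((-u) • !![a, b; c, l₁ + l₂ - a]) 1 0| =
      |c| * (1 / l₂ - 1 / l₁) / (l₁ - l₂) := by
    rw [integral_abs_exp_neg_smul_apply h12 hA, ← integral_abs_exp_sub_exp_of_le h2 h12.le
      zero_le_one le_rfl, ← integral_const_mul]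
    congr 1
    refine setIntegral_congr_fun measurableSet_Ioi fun u _ => ?_
    rw [← abs_mul, ← abs_neg]
    congr 1
    simp
    ring
  have hdiag : ∫ u in Ioi (0 : ℝ), |NormedSpace.exp ((-u) • !![a, b; c, l₁ + l₂ - a]) 1 1| =
      ((l₁ - a) / l₁ - (l₂ - a) / l₂ + 2 * (l₂ - a) * (l₁ - l₂) / (l₁ * l₂) *
        ((l₁ - a) / (l₂ - a)) ^ (-l₂ / (l₁ - l₂))) / (l₁ - l₂) := by
    rw [integral_abs_exp_neg_smul_apply h12 hA, ← integral_abs_exp_sub_exp_of_lt h2 h12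
      (sub_pos.2 h2a) (by linarith)]
    congr 1
    refine setIntegral_congr_fun measurableSet_Ioi fun u _ => ?_
    congr 1
    simp
    ring
  have hd : l₁ - l₂ ≠ 0 := (sub_pos.2 h12).ne'
  rw [Fin.sum_univ_two, hoff, hdiag]
  generalize ((l₁ - a) / (l₂ - a)) ^ (-l₂ / (l₁ - l₂)) = X
  field_simp
  ring

end TwoByTwo

theorem stmt_7 (a b c lam1 lam2 : ℝ)
    (h12 : lam1 > lam2) (h2 : lam2 > 0) (h2a : lam2 > a)
    (hbc : b * c = (lam1 - a) * (a - lam2))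
    (A : Matrix (Fin 2) (Fin 2) ℝ) (hA : A = !![a, b; c, lam1 + lam2 - a]) :
    ∀ ε > (0:ℝ), ∀ φ : ℝ → (Fin 2 → ℝ), Differentiable ℝ φ →
      (∀ t : ℝ, ‖deriv φ t - A.mulVec (φ t)‖ ≤ ε) →
      ∃ x₀ : Fin 2 → ℝ, ∀ t : ℝ,
        ‖φ t - (NormedSpace.exp (t • A)).mulVec x₀‖ ≤
          max ((lam1 + lam2 + |b| - a) / (lam1 * lam2))
              ((a + |c| + 2 * (lam2 - a) *
                ((lam1 - a) / (lam2 - a)) ^ (-lam2 / (lam1 - lam2)))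
                / (lam1 * lam2)) * ε := by
  subst hA
  refine IsHyersUlamStable.of_integrable (integrableOn_exp_neg_smul_apply (h2.trans h12) h2
    h12.ne' (sub_smul_one_mul_sub_smul_one_eq_zero hbc)) fun i => ?_
  fin_cases i
  · exact (sum_integral_abs_exp_neg_smul_apply_zero h12 h2 h2a hbc).trans_le (le_max_left _ _)
  · exact (sum_integral_abs_exp_neg_smul_apply_one h12 h2 h2a hbc).trans_le (le_max_right _ _)
end

section
/- Let λ₁, λ₂ ∈ ℝ (or complex conjugates) and suppose the 2×2 system x' = Ax with A = [[0,1],[−λ₁λ₂, λ₁+λ₂]] is Hyers-Ulam stable on ℝ with constant K. Then the scalar equation x''(t) − (λ₁+λ₂)x'(t) + λ₁λ₂x(t) = 0 is Hyers-Ulam stable on ℝ with the same constant K: for every ε > 0 and twice-differentiable φ: ℝ → ℝ with |φ''(t) − (λ₁+λ₂)φ'(t) + λ₁λ₂φ(t)| ≤ ε on ℝ, there exists a solution x of the scalar equation with |φ(t) − x(t)| ≤ Kε on ℝ. -/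
/-!
The companion substitution `Φ = (φ, φ')` turns the scalar defect of `φ` into the vector
defect `Φ' - AΦ = (0, φ'' - sφ' + qφ)`, whose sup norm is the same number. Stability of the
system then yields `X₀` with `‖Φ t - exp (tA) X₀‖ ≤ Kε`; the first component of `exp (tA) X₀`
solves the scalar equation, and its distance to `φ t` is bounded by that sup norm.
-/

open Matrix

theorem companion_mulVec {R : Type*} [CommRing R] (s q : R) (v : Fin 2 → R) :
    !![0, 1; -q, s] *ᵥ v = ![v 1, -q * v 0 + s * v 1] := by
  ext i
  fin_cases i <;> simp [mulVec, dotProduct, Fin.sum_univ_two]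

section exp

attribute [local instance] Matrix.linftyOpNormedRing Matrix.linftyOpNormedAlgebra

theorem hasDerivAt_exp_smul_mulVec {𝕂 n : Type*} [RCLike 𝕂] [Fintype n] [DecidableEq n]
    (A : Matrix n n 𝕂) (v : n → 𝕂) (t : 𝕂) :
    HasDerivAt (fun u : 𝕂 => NormedSpace.exp (u • A) *ᵥ v)
      (A *ᵥ (NormedSpace.exp (t • A) *ᵥ v)) t := by
  let evalAt : Matrix n n 𝕂 →L[𝕂] n → 𝕂 :=
    LinearMap.toContinuousLinearMap ((mulVecBilin 𝕂 𝕂).flip v)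
  rw [mulVec_mulVec]
  exact evalAt.hasFDerivAt.comp_hasDerivAt t (hasDerivAt_exp_smul_const' A t)

end exp

theorem hasDerivAt_vecCons_deriv {𝕜 E : Type*} [NontriviallyNormedField 𝕜]
    [NormedAddCommGroup E] [NormedSpace 𝕜 E] {φ : 𝕜 → E} (hφ : Differentiable 𝕜 φ)
    (hφ' : Differentiable 𝕜 (deriv φ)) (t : 𝕜) :
    HasDerivAt (fun u => ![φ u, deriv φ u]) ![deriv φ t, deriv (deriv φ) t] t := by
  rw [hasDerivAt_pi]
  intro i
  fin_cases i
  · exact (hφ t).hasDerivAt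
  · exact (hφ' t).hasDerivAt

theorem norm_vecCons_zero {E : Type*} [SeminormedAddGroup E] (r : E) :
    ‖(![0, r] : Fin 2 → E)‖ = ‖r‖ := by
  refine le_antisymm ((pi_norm_le_iff_of_nonneg (norm_nonneg r)).2 fun i => ?_) ?_
  · fin_cases i <;> simp
  · simpa using norm_le_pi_norm (![0, r] : Fin 2 → E) 1

theorem norm_deriv_sub_companion_mulVec {φ : ℝ → ℝ} (hφ : Differentiable ℝ φ)
    (hφ' : Differentiable ℝ (deriv φ)) (s q t : ℝ) :
    ‖deriv (fun u => ![φ u, deriv φ u]) t - !![0, 1; -q, s] *ᵥ ![φ t, deriv φ t]‖ =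
      |deriv (deriv φ) t - s * deriv φ t + q * φ t| := by
  have hdefect : ![deriv φ t, deriv (deriv φ) t] - ![deriv φ t, -q * φ t + s * deriv φ t] =
      ![0, deriv (deriv φ) t - s * deriv φ t + q * φ t] := by
    ext i
    fin_cases i <;> simp; ring
  rw [(hasDerivAt_vecCons_deriv hφ hφ' t).deriv, companion_mulVec, cons_val_zero, cons_val_one,
    cons_val_zero, hdefect, norm_vecCons_zero, Real.norm_eq_abs]

theorem fst_solves_of_hasDerivAt_companion {X : ℝ → Fin 2 → ℝ} {s q : ℝ}
    (hX : ∀ t, HasDerivAt X (!![0, 1; -q, s] *ᵥ X t) t) :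
    Differentiable ℝ (fun t => X t 0) ∧ Differentiable ℝ (deriv fun t => X t 0) ∧
      ∀ t, deriv (deriv fun t => X t 0) t - s * deriv (fun t => X t 0) t + q * X t 0 = 0 := by
  have hfst (t : ℝ) : HasDerivAt (fun u => X u 0) (X t 1) t := by
    simpa only [companion_mulVec, cons_val_zero] using hasDerivAt_pi.1 (hX t) 0
  have hsnd (t : ℝ) : HasDerivAt (fun u => X u 1) (-q * X t 0 + s * X t 1) t := by
    simpa only [companion_mulVec, cons_val_one, cons_val_zero] using hasDerivAt_pi.1 (hX t) 1
  have hderiv : deriv (fun t => X t 0) = fun t => X t 1 := funext fun t => (hfst t).deriv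
  refine ⟨fun t => (hfst t).differentiableAt, ?_, fun t => ?_⟩
  · rw [hderiv]
    exact fun t => (hsnd t).differentiableAt
  · rw [hderiv, (hsnd t).deriv]
    ring

theorem stmt_17_general
    (s q : ℝ)
    (A : Matrix (Fin 2) (Fin 2) ℝ) (hA : A = !![0, 1; -q, s])
    (K : ℝ)
    (hK : ∀ ε > (0:ℝ), ∀ Φ : ℝ → (Fin 2 → ℝ), Differentiable ℝ Φ →
      (∀ t : ℝ, ‖deriv Φ t - A.mulVec (Φ t)‖ ≤ ε) →
      ∃ X₀ : Fin 2 → ℝ, ∀ t : ℝ,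
        ‖Φ t - (NormedSpace.exp (t • A)).mulVec X₀‖ ≤ K * ε) :
    ∀ ε > (0:ℝ), ∀ φ : ℝ → ℝ, Differentiable ℝ φ → Differentiable ℝ (deriv φ) →
      (∀ t : ℝ, |deriv (deriv φ) t - s * deriv φ t + q * φ t| ≤ ε) →
      ∃ x : ℝ → ℝ, Differentiable ℝ x ∧ Differentiable ℝ (deriv x) ∧
        (∀ t : ℝ, deriv (deriv x) t - s * deriv x t + q * x t = 0) ∧
        ∀ t : ℝ, |φ t - x t| ≤ K * ε := by
  subst hA
  intro ε hε φ hφ hφ' hdefect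
  obtain ⟨X₀, hX₀⟩ := hK ε hε (fun u => ![φ u, deriv φ u])
    (fun t => (hasDerivAt_vecCons_deriv hφ hφ' t).differentiableAt)
    (fun t => (norm_deriv_sub_companion_mulVec hφ hφ' s q t).trans_le (hdefect t))
  obtain ⟨hx, hx', hsolves⟩ := fst_solves_of_hasDerivAt_companion
    (hasDerivAt_exp_smul_mulVec !![0, 1; -q, s] X₀)
  refine ⟨_, hx, hx', hsolves, fun t => ?_⟩
  simpa using (norm_le_pi_norm _ 0).trans (hX₀ t)

theorem stmt_17 (lam1 lam2 : ℂ)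
    (hconj : (lam1.im = 0 ∧ lam2.im = 0) ∨ lam2 = starRingEnd ℂ lam1)
    (s q : ℝ) (hs : (s : ℂ) = lam1 + lam2) (hq : (q : ℂ) = lam1 * lam2)
    (A : Matrix (Fin 2) (Fin 2) ℝ) (hA : A = !![0, 1; -q, s])
    (K : ℝ)
    (hK : ∀ ε > (0:ℝ), ∀ Φ : ℝ → (Fin 2 → ℝ), Differentiable ℝ Φ →
      (∀ t : ℝ, ‖deriv Φ t - A.mulVec (Φ t)‖ ≤ ε) →
      ∃ X₀ : Fin 2 → ℝ, ∀ t : ℝ,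
        ‖Φ t - (NormedSpace.exp (t • A)).mulVec X₀‖ ≤ K * ε) :
    ∀ ε > (0:ℝ), ∀ φ : ℝ → ℝ, Differentiable ℝ φ → Differentiable ℝ (deriv φ) →
      (∀ t : ℝ, |deriv (deriv φ) t - s * deriv φ t + q * φ t| ≤ ε) →
      ∃ x : ℝ → ℝ, Differentiable ℝ x ∧ Differentiable ℝ (deriv x) ∧
        (∀ t : ℝ, deriv (deriv x) t - s * deriv x t + q * x t = 0) ∧
        ∀ t : ℝ, |φ t - x t| ≤ K * ε :=
  stmt_17_general s q A hA K hK
end
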